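/- arXiv:1811.11454 — 11 statements merged into one kernel-verified Lean document; each statement's English description precedes it below -/
import Mathlib

section
/- The maximal robust invariant set equals the zero sublevel set of the value function: R₀ = {x ∈ ℝⁿ | V(x) ≤ 0}. -/
/-- Trajectory of the discrete-time system `f` from initial state `x`
under input policy `π` : `φ_x^π(0) = x`, `φ_x^π(l+1) = f(φ_x^π(l), π(l))`. -/
noncomputable def traj {n m : ℕ} (f : (Fin n → ℝ) → (Fin m → ℝ) → (Fin n → ℝ))
    (x : Fin n → ℝ) (π : ℕ → Fin m → ℝ) : ℕ → Fin n → ℝ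
  | 0 => x
  | l + 1 => f (traj f x π l) (π l)

/-- Value function `V(x) = sup_{π, l, j} α^l · g_j(φ_x^π(l))`, where the
supremum ranges over input policies `π` (sequences taking values in `D`),
times `l ∈ ℕ` and indices `j ∈ {1,…,n₀}`. -/
noncomputable def valueFun {n m n₀ : ℕ} (f : (Fin n → ℝ) → (Fin m → ℝ) → (Fin n → ℝ))
    (D : Set (Fin m → ℝ)) (g : Fin n₀ → (Fin n → ℝ) → ℝ) (α : ℝ)
    (x : Fin n → ℝ) : ℝ :=
  sSup {v : ℝ | ∃ π : ℕ → Fin m → ℝ, (∀ i, π i ∈ D) ∧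
    ∃ l : ℕ, ∃ j : Fin n₀, v = α ^ l * g j (traj f x π l)}

/-- The maximal robust invariant set `R₀`: states from which every trajectory
stays in the state constraint set `X₀ = {x | ∀ j, g_j(x) ≤ 0}` forever,
under every input policy. -/
def maxRobustInv {n m n₀ : ℕ} (f : (Fin n → ℝ) → (Fin m → ℝ) → (Fin n → ℝ))
    (D : Set (Fin m → ℝ)) (g : Fin n₀ → (Fin n → ℝ) → ℝ) : Set (Fin n → ℝ) :=
  {x | ∀ π : ℕ → Fin m → ℝ, (∀ i, π i ∈ D) →
    ∀ l : ℕ, traj f x π l ∈ {y | ∀ j : Fin n₀, g j y ≤ 0}}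

/-- `R₀ = {x ∈ ℝⁿ | V(x) ≤ 0}`. -/
theorem maxRobustInv_eq_sublevel {n m n₀ : ℕ} (hn₀ : 1 ≤ n₀)
    (f : (Fin n → ℝ) → (Fin m → ℝ) → (Fin n → ℝ))
    (D : Set (Fin m → ℝ)) (hD : D.Nonempty)
    (g : Fin n₀ → (Fin n → ℝ) → ℝ)
    (hg : ∀ (j : Fin n₀) (x : Fin n → ℝ), -1 < g j x ∧ g j x < 1)
    (α : ℝ) (hα : α ∈ Set.Ioc (0 : ℝ) 1) :
    maxRobustInv f D g = {x : Fin n → ℝ | valueFun f D g α x ≤ 0} := by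
  obtain ⟨hα0, hα1⟩ := hα
  ext x
  constructor
  · intro hx
    show valueFun f D g α x ≤ 0
    apply Real.sSup_le _ le_rfl
    rintro v ⟨π, hπ, l, j, rfl⟩
    have hgle : g j (traj f x π l) ≤ 0 := hx π hπ l j
    have : (0:ℝ) < α ^ l := pow_pos hα0 l
    nlinarith
  · intro hx π hπ l j
    by_contra h
    push_neg at h
    have hbdd : BddAbove {v : ℝ | ∃ π : ℕ → Fin m → ℝ, (∀ i, π i ∈ D) ∧
        ∃ l : ℕ, ∃ j : Fin n₀, v = α ^ l * g j (traj f x π l)} := by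
      refine ⟨1, ?_⟩
      rintro v ⟨π', hπ', l', j', rfl⟩
      have h1 : g j' (traj f x π' l') < 1 := (hg j' _).2
      have h2 : (0:ℝ) < α ^ l' := pow_pos hα0 l'
      have h3 : α ^ l' ≤ 1 := pow_le_one₀ hα0.le hα1
      nlinarith
    have hmem : α ^ l * g j (traj f x π l) ∈ {v : ℝ | ∃ π : ℕ → Fin m → ℝ, (∀ i, π i ∈ D) ∧
        ∃ l : ℕ, ∃ j : Fin n₀, v = α ^ l * g j (traj f x π l)} := ⟨π, hπ, l, j, rfl⟩
    have := le_csSup hbdd hmem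
    have hVx : valueFun f D g α x ≤ 0 := hx
    have hpos : (0:ℝ) < α ^ l := pow_pos hα0 l
    unfold valueFun at hVx
    nlinarith
end

section
/- If α ∈ (0,1), then V(x) ≥ 0 for every x ∈ ℝⁿ, and consequently the maximal robust invariant set equals the zero level set of the value function: R₀ = {x ∈ ℝⁿ | V(x) = 0}. -/
/-- if `α ∈ (0,1)` then `V(x) ≥ 0` for every `x`, and consequently
`R₀ = {x ∈ ℝⁿ | V(x) = 0}`. -/
theorem valueFun_nonneg_and_maxRobustInv_eq_zeroLevel {n m n₀ : ℕ} (hn₀ : 1 ≤ n₀)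
    (f : (Fin n → ℝ) → (Fin m → ℝ) → (Fin n → ℝ))
    (D : Set (Fin m → ℝ)) (hD : D.Nonempty)
    (g : Fin n₀ → (Fin n → ℝ) → ℝ)
    (hg : ∀ (j : Fin n₀) (x : Fin n → ℝ), -1 < g j x ∧ g j x < 1)
    (α : ℝ) (hα : α ∈ Set.Ioo (0 : ℝ) 1) :
    (∀ x : Fin n → ℝ, 0 ≤ valueFun f D g α x) ∧
      maxRobustInv f D g = {x : Fin n → ℝ | valueFun f D g α x = 0} := by
  obtain ⟨hα0, hα1⟩ := hα
  obtain ⟨u, hu⟩ := hD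
  have hbdd : ∀ x : Fin n → ℝ, BddAbove {v : ℝ | ∃ π : ℕ → Fin m → ℝ, (∀ i, π i ∈ D) ∧
      ∃ l : ℕ, ∃ j : Fin n₀, v = α ^ l * g j (traj f x π l)} := by
    intro x
    refine ⟨1, ?_⟩
    rintro v ⟨π, hπ, l, j, rfl⟩
    have h1 : α ^ l * g j (traj f x π l) ≤ α ^ l * 1 :=
      mul_le_mul_of_nonneg_left (le_of_lt (hg j _).2) (le_of_lt (pow_pos hα0 l))
    calc α ^ l * g j (traj f x π l) ≤ α ^ l * 1 := h1
      _ = α ^ l := mul_one _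
      _ ≤ 1 := pow_le_one₀ hα0.le hα1.le
  have hnonneg : ∀ x : Fin n → ℝ, 0 ≤ valueFun f D g α x := by
    intro x
    have key : ∀ l : ℕ, -(α ^ l) ≤ valueFun f D g α x := by
      intro l
      have hmem : α ^ l * g ⟨0, hn₀⟩ (traj f x (fun _ => u) l) ∈
          {v : ℝ | ∃ π : ℕ → Fin m → ℝ, (∀ i, π i ∈ D) ∧
            ∃ l : ℕ, ∃ j : Fin n₀, v = α ^ l * g j (traj f x π l)} :=
        ⟨fun _ => u, fun _ => hu, l, ⟨0, hn₀⟩, rfl⟩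
      have hle := le_csSup (hbdd x) hmem
      have : -(α ^ l) ≤ α ^ l * g ⟨0, hn₀⟩ (traj f x (fun _ => u) l) := by
        have := (hg ⟨0, hn₀⟩ (traj f x (fun _ => u) l)).1
        nlinarith [pow_pos hα0 l]
      exact this.trans hle
    have htend : Filter.Tendsto (fun l : ℕ => -(α ^ l)) Filter.atTop (nhds 0) := by
      have := tendsto_pow_atTop_nhds_zero_of_lt_one hα0.le hα1
      simpa using this.neg
    exact le_of_tendsto' htend key
  refine ⟨hnonneg, ?_⟩
  ext x
  simp only [maxRobustInv, Set.mem_setOf_eq]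
  constructor
  · intro hx
    refine le_antisymm ?_ (hnonneg x)
    apply Real.sSup_le
    · rintro v ⟨π, hπ, l, j, rfl⟩
      have := hx π hπ l j
      nlinarith [pow_pos hα0 l]
    · exact le_refl 0
  · intro hV π hπ l j
    by_contra hpos
    push_neg at hpos
    have hmem : α ^ l * g j (traj f x π l) ∈
        {v : ℝ | ∃ π : ℕ → Fin m → ℝ, (∀ i, π i ∈ D) ∧
          ∃ l : ℕ, ∃ j : Fin n₀, v = α ^ l * g j (traj f x π l)} :=
      ⟨π, hπ, l, j, rfl⟩
    have hle := le_csSup (hbdd x) hmem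
    have : (0:ℝ) < α ^ l * g j (traj f x π l) := mul_pos (pow_pos hα0 l) hpos
    have : (0:ℝ) < valueFun f D g α x := lt_of_lt_of_le this hle
    rw [hV] at this
    exact lt_irrefl 0 this
end

section
/- Suppose α ∈ (0,1), each g_j is Lipschitz continuous on ℝⁿ, and there is a constant L_f ≥ 0 such that ‖f(x,d) − f(y,d)‖ ≤ L_f · ‖x − y‖ for all x, y ∈ ℝⁿ and all d ∈ D (the single-subsystem case, where no switching-induced discontinuity occurs). Then the value function V is continuous on ℝⁿ. -/
/-- in the single-subsystem case with `α ∈ (0,1)`, if each `g_j`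
is Lipschitz continuous and `f(·,d)` is `L_f`-Lipschitz uniformly in `d ∈ D`,
then the value function `V` is continuous on `ℝⁿ`. -/
theorem valueFun_continuous {n m n₀ : ℕ} (hn₀ : 1 ≤ n₀)
    (f : (Fin n → ℝ) → (Fin m → ℝ) → (Fin n → ℝ))
    (D : Set (Fin m → ℝ)) (hD : D.Nonempty)
    (g : Fin n₀ → (Fin n → ℝ) → ℝ)
    (hg : ∀ (j : Fin n₀) (x : Fin n → ℝ), -1 < g j x ∧ g j x < 1)
    (hglip : ∀ j : Fin n₀, ∃ L : NNReal, LipschitzWith L (g j))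
    (Lf : ℝ) (hLf : 0 ≤ Lf)
    (hflip : ∀ (x y : Fin n → ℝ), ∀ d ∈ D, ‖f x d - f y d‖ ≤ Lf * ‖x - y‖)
    (α : ℝ) (hα : α ∈ Set.Ioo (0 : ℝ) 1) :
    Continuous (valueFun f D g α) := by
  obtain ⟨L, hL⟩ : ∃ L : NNReal, ∀ j, LipschitzWith L (g j) := by
    refine ⟨Finset.univ.sup fun j => (hglip j).choose, fun j => ?_⟩
    exact ((hglip j).choose_spec).weaken
      (Finset.le_sup (f := fun j => (hglip j).choose) (Finset.mem_univ j))
  set A : (Fin n → ℝ) → Set ℝ := fun z => {v : ℝ | ∃ π : ℕ → Fin m → ℝ, (∀ i, π i ∈ D) ∧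
    ∃ l : ℕ, ∃ j : Fin n₀, v = α ^ l * g j (traj f z π l)} with hA
  have hVal : ∀ z, valueFun f D g α z = sSup (A z) := fun z => rfl
  have hNe : ∀ z, (A z).Nonempty := by
    intro z
    exact ⟨α ^ 0 * g ⟨0, hn₀⟩ (traj f z (fun _ => hD.choose) 0),
      fun _ => hD.choose, fun _ => hD.choose_spec, 0, ⟨0, hn₀⟩, rfl⟩
  have hBdd : ∀ z, BddAbove (A z) := by
    intro z
    refine ⟨1, ?_⟩
    rintro v ⟨π, hπ, l, j, rfl⟩
    calc α ^ l * g j (traj f z π l) ≤ α ^ l * 1 :=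
          mul_le_mul_of_nonneg_left (hg j _).2.le (pow_nonneg hα.1.le l)
      _ ≤ 1 := by rw [mul_one]; exact pow_le_one₀ hα.1.le hα.2.le
  have htraj : ∀ (a b : Fin n → ℝ) (π : ℕ → Fin m → ℝ), (∀ i, π i ∈ D) →
      ∀ l, ‖traj f a π l - traj f b π l‖ ≤ Lf ^ l * ‖a - b‖ := by
    intro a b π hπ l
    induction l with
    | zero => simp [traj]
    | succ l ih =>
      calc ‖traj f a π (l+1) - traj f b π (l+1)‖
          ≤ Lf * ‖traj f a π l - traj f b π l‖ := hflip _ _ _ (hπ l)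
        _ ≤ Lf * (Lf ^ l * ‖a - b‖) := mul_le_mul_of_nonneg_left ih hLf
        _ = Lf ^ (l+1) * ‖a - b‖ := by ring
  rw [Metric.continuous_iff]
  intro x ε hε
  obtain ⟨N, hN⟩ := exists_pow_lt_of_lt_one (show (0:ℝ) < ε/4 by linarith) hα.2
  obtain ⟨M, hM⟩ : ∃ M : ℝ, M = max 1 Lf := ⟨_, rfl⟩
  have hM1 : (1:ℝ) ≤ M := hM ▸ le_max_left _ _
  obtain ⟨C, hC⟩ : ∃ C : ℝ, C = (L : ℝ) * M ^ N + 1 := ⟨_, rfl⟩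
  have hMpos : (0:ℝ) < M := lt_of_lt_of_le one_pos hM1
  have hCpos : 0 < C := by rw [hC]; positivity
  have key : ∀ a b : Fin n → ℝ,
      valueFun f D g α a ≤ valueFun f D g α b + max (2 * α ^ N) (C * ‖a - b‖) := by
    intro a b
    rw [hVal, hVal]
    apply csSup_le (hNe a)
    rintro v ⟨π, hπ, l, j, rfl⟩
    have hmem : α ^ l * g j (traj f b π l) ∈ A b := ⟨π, hπ, l, j, rfl⟩
    have hαl : (0:ℝ) < α ^ l := pow_pos hα.1 l
    have hnorm : (0:ℝ) ≤ ‖a - b‖ := norm_nonneg _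
    set u := traj f a π l
    set w := traj f b π l
    have hterm : α ^ l * g j u - α ^ l * g j w ≤ max (2 * α ^ N) (C * ‖a - b‖) := by
      have hd2 : |g j u - g j w| ≤ 2 := by
        have h1 := hg j u; have h2 := hg j w
        rw [abs_le]; constructor <;> [linarith [h1.1, h2.2]; linarith [h1.2, h2.1]]
      have hdL : |g j u - g j w| ≤ (L:ℝ) * (Lf ^ l * ‖a - b‖) := by
        have hlip := (hL j).dist_le_mul u w
        rw [Real.dist_eq, dist_eq_norm] at hlip
        exact hlip.trans (mul_le_mul_of_nonneg_left (htraj a b π hπ l) L.coe_nonneg)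
      have habs : α ^ l * g j u - α ^ l * g j w ≤ α ^ l * |g j u - g j w| := by
        rw [← mul_sub]
        exact mul_le_mul_of_nonneg_left (le_abs_self _) hαl.le
      rcases lt_or_ge l N with hl | hl
      · refine le_trans ?_ (le_max_right _ _)
        have h1 : α ^ l ≤ 1 := pow_le_one₀ hα.1.le hα.2.le
        have h2 : Lf ^ l ≤ M ^ N := by
          calc Lf ^ l ≤ M ^ l := pow_le_pow_left₀ hLf (hM ▸ le_max_right _ _) l
            _ ≤ M ^ N := pow_le_pow_right₀ hM1 hl.le
        calc α ^ l * g j u - α ^ l * g j w ≤ α ^ l * |g j u - g j w| := habs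
          _ ≤ 1 * |g j u - g j w| :=
              mul_le_mul_of_nonneg_right h1 (abs_nonneg _)
          _ = |g j u - g j w| := one_mul _
          _ ≤ (L:ℝ) * (Lf ^ l * ‖a - b‖) := hdL
          _ ≤ (L:ℝ) * (M ^ N * ‖a - b‖) :=
              mul_le_mul_of_nonneg_left (mul_le_mul_of_nonneg_right h2 hnorm) L.coe_nonneg
          _ = ((L:ℝ) * M ^ N) * ‖a - b‖ := by ring
          _ ≤ C * ‖a - b‖ := by
              apply mul_le_mul_of_nonneg_right _ hnorm
              rw [hC]; linarith
      · refine le_trans ?_ (le_max_left _ _)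
        have h1 : α ^ l ≤ α ^ N := pow_le_pow_of_le_one hα.1.le hα.2.le hl
        calc α ^ l * g j u - α ^ l * g j w ≤ α ^ l * |g j u - g j w| := habs
          _ ≤ α ^ l * 2 := mul_le_mul_of_nonneg_left hd2 hαl.le
          _ ≤ α ^ N * 2 := mul_le_mul_of_nonneg_right h1 (by norm_num)
          _ = 2 * α ^ N := by ring
    have hle : α ^ l * g j w ≤ sSup (A b) := le_csSup (hBdd b) hmem
    linarith
  refine ⟨min 1 (ε / 4 / C), by positivity, fun y hy => ?_⟩
  have hyx : ‖y - x‖ < ε / 4 / C := by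
    rw [← dist_eq_norm]; exact lt_of_lt_of_le hy (min_le_right _ _)
  have hxy : ‖x - y‖ < ε / 4 / C := by rwa [norm_sub_rev]
  have hmax1 : C * ‖y - x‖ < ε / 4 := by
    have := mul_lt_mul_of_pos_left hyx hCpos
    rwa [mul_div_cancel₀ _ (ne_of_gt hCpos)] at this
  have hmax2 : C * ‖x - y‖ < ε / 4 := by
    have := mul_lt_mul_of_pos_left hxy hCpos
    rwa [mul_div_cancel₀ _ (ne_of_gt hCpos)] at this
  have h1 := key y x
  have h2 := key x y
  rw [Real.dist_eq, abs_sub_lt_iff]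
  constructor
  · have : max (2 * α ^ N) (C * ‖y - x‖) < ε := by
      apply max_lt <;> linarith
    linarith
  · have : max (2 * α ^ N) (C * ‖x - y‖) < ε := by
      apply max_lt <;> linarith
    linarith
end

section
/- Dynamic programming principle: for every x ∈ ℝⁿ and every l ∈ ℕ, V(x) = sup over input policies π of the maximum of α^l · V(φ_x^π(l)) and sup_{i ∈ ℕ, 0 ≤ i < l} max_{1 ≤ j ≤ n₀} α^i · g_j(φ_x^π(i)). -/
lemma traj_congr {n m : ℕ} (f : (Fin n → ℝ) → (Fin m → ℝ) → (Fin n → ℝ))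
    (x : Fin n → ℝ) {π ρ : ℕ → Fin m → ℝ} :
    ∀ l, (∀ i < l, π i = ρ i) → traj f x π l = traj f x ρ l
  | 0, _ => rfl
  | l + 1, h => by
    show f (traj f x π l) (π l) = f (traj f x ρ l) (ρ l)
    rw [traj_congr f x l (fun i hi => h i (hi.trans (Nat.lt_succ_self l))),
      h l (Nat.lt_succ_self l)]

lemma traj_add {n m : ℕ} (f : (Fin n → ℝ) → (Fin m → ℝ) → (Fin n → ℝ))
    (x : Fin n → ℝ) (π : ℕ → Fin m → ℝ) (l : ℕ) :
    ∀ k, traj f x π (l + k) = traj f (traj f x π l) (fun i => π (l + i)) k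
  | 0 => rfl
  | k + 1 => by
    show f (traj f x π (l + k)) (π (l + k)) = _
    rw [traj_add f x π l k]; rfl

/-- dynamic programming principle: for every `x` and `l`,
`V(x)` equals the supremum over input policies `π` of
`max { α^l · V(φ_x^π(l)), max_{0 ≤ i < l, 1 ≤ j ≤ n₀} α^i · g_j(φ_x^π(i)) }`;
this supremum of maxima is expressed as the supremum of the set collecting,
for each admissible policy `π`, the value `α^l · V(φ_x^π(l))` together with
all values `α^i · g_j(φ_x^π(i))` for `i < l` and `j ∈ {1,…,n₀}`. -/
theorem valueFun_dynamicProgramming {n m n₀ : ℕ} (hn₀ : 1 ≤ n₀)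
    (f : (Fin n → ℝ) → (Fin m → ℝ) → (Fin n → ℝ))
    (D : Set (Fin m → ℝ)) (hD : D.Nonempty)
    (g : Fin n₀ → (Fin n → ℝ) → ℝ)
    (hg : ∀ (j : Fin n₀) (x : Fin n → ℝ), -1 < g j x ∧ g j x < 1)
    (α : ℝ) (hα : α ∈ Set.Ioc (0 : ℝ) 1) :
    ∀ (x : Fin n → ℝ) (l : ℕ),
      valueFun f D g α x =
        sSup {v : ℝ | ∃ π : ℕ → Fin m → ℝ, (∀ i, π i ∈ D) ∧
          (v = α ^ l * valueFun f D g α (traj f x π l) ∨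
            ∃ i < l, ∃ j : Fin n₀, v = α ^ i * g j (traj f x π i))} := by
  intro x l
  obtain ⟨d, hd⟩ := hD
  have hαpos : (0:ℝ) < α := hα.1
  have hαle : α ≤ 1 := hα.2
  set S : (Fin n → ℝ) → Set ℝ := fun y => {v : ℝ | ∃ π : ℕ → Fin m → ℝ,
    (∀ i, π i ∈ D) ∧ ∃ L : ℕ, ∃ j : Fin n₀, v = α ^ L * g j (traj f y π L)} with hS
  have hV : ∀ y, valueFun f D g α y = sSup (S y) := fun y => rfl
  -- every element of S y is ≤ 1
  have hSle1 : ∀ y, ∀ v ∈ S y, v ≤ 1 := by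
    intro y v hv
    obtain ⟨π, hπ, L, j, rfl⟩ := hv
    calc α ^ L * g j (traj f y π L) ≤ α ^ L * 1 :=
          mul_le_mul_of_nonneg_left (hg j _).2.le (pow_pos hαpos L).le
      _ = α ^ L := mul_one _
      _ ≤ 1 := pow_le_one₀ hαpos.le hαle
  have hSbd : ∀ y, BddAbove (S y) := fun y => ⟨1, fun v hv => hSle1 y v hv⟩
  have hSne : ∀ y, (S y).Nonempty := by
    intro y
    exact ⟨α ^ 0 * g ⟨0, hn₀⟩ (traj f y (fun _ => d) 0), fun _ => d, fun _ => hd,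
      0, ⟨0, hn₀⟩, rfl⟩
  set T : Set ℝ := {v : ℝ | ∃ π : ℕ → Fin m → ℝ, (∀ i, π i ∈ D) ∧
    (v = α ^ l * valueFun f D g α (traj f x π l) ∨
      ∃ i < l, ∃ j : Fin n₀, v = α ^ i * g j (traj f x π i))} with hT
  have hVle1 : ∀ y, valueFun f D g α y ≤ 1 := by
    intro y
    rw [hV]
    exact csSup_le (hSne y) (hSle1 y)
  have hTle1 : ∀ v ∈ T, v ≤ 1 := by
    intro v hv
    obtain ⟨π, hπ, hv | ⟨i, hi, j, rfl⟩⟩ := hv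
    · subst hv
      calc α ^ l * valueFun f D g α (traj f x π l) ≤ α ^ l * 1 :=
            mul_le_mul_of_nonneg_left (hVle1 _) (pow_pos hαpos l).le
        _ = α ^ l := mul_one _
        _ ≤ 1 := pow_le_one₀ hαpos.le hαle
    · calc α ^ i * g j (traj f x π i) ≤ α ^ i * 1 :=
            mul_le_mul_of_nonneg_left (hg j _).2.le (pow_pos hαpos i).le
        _ = α ^ i := mul_one _
        _ ≤ 1 := pow_le_one₀ hαpos.le hαle
  have hTbd : BddAbove T := ⟨1, fun v hv => hTle1 v hv⟩
  have hTne : T.Nonempty :=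
    ⟨α ^ l * valueFun f D g α (traj f x (fun _ => d) l),
      fun _ => d, fun _ => hd, Or.inl rfl⟩
  rw [hV]
  apply le_antisymm
  · -- V x ≤ sSup T
    apply csSup_le (hSne x)
    rintro v ⟨π, hπ, L, j, rfl⟩
    rcases lt_or_ge L l with hL | hL
    · exact le_csSup hTbd ⟨π, hπ, Or.inr ⟨L, hL, j, rfl⟩⟩
    · obtain ⟨k, rfl⟩ := Nat.exists_eq_add_of_le hL
      set y := traj f x π l with hy
      have hmem : α ^ k * g j (traj f y (fun i => π (l + i)) k) ∈ S y :=
        ⟨fun i => π (l + i), fun i => hπ _, k, j, rfl⟩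
      have h1 : α ^ (l + k) * g j (traj f x π (l + k)) =
          α ^ l * (α ^ k * g j (traj f y (fun i => π (l + i)) k)) := by
        rw [traj_add f x π l k, pow_add, mul_assoc]
      rw [h1]
      have h2 : α ^ k * g j (traj f y (fun i => π (l + i)) k) ≤
          valueFun f D g α y := by
        rw [hV]; exact le_csSup (hSbd y) hmem
      calc α ^ l * (α ^ k * g j (traj f y (fun i => π (l + i)) k))
          ≤ α ^ l * valueFun f D g α y :=
            mul_le_mul_of_nonneg_left h2 (pow_pos hαpos l).le
        _ ≤ sSup T := le_csSup hTbd ⟨π, hπ, Or.inl rfl⟩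
  · -- sSup T ≤ V x
    apply csSup_le hTne
    rintro v ⟨π, hπ, hv | ⟨i, hi, j, rfl⟩⟩
    · subst hv
      set y := traj f x π l with hy
      have key : ∀ w ∈ S y, α ^ l * w ≤ valueFun f D g α x := by
        rintro w ⟨σ, hσ, k, j, rfl⟩
        set ρ : ℕ → Fin m → ℝ := fun i => if i < l then π i else σ (i - l) with hρ
        have hρD : ∀ i, ρ i ∈ D := by
          intro i; by_cases h : i < l <;> simp [hρ, h, hπ i, hσ (i - l)]
        have hyρ : traj f x ρ l = y := by
          rw [hy]
          exact traj_congr f x l (fun i hi => by simp [hρ, hi])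
        have htail : traj f x ρ (l + k) = traj f y σ k := by
          rw [traj_add f x ρ l k, hyρ]
          exact traj_congr f y k (fun i _ => by
            simp [hρ, Nat.not_lt.mpr (Nat.le_add_right l i)])
        have : α ^ (l + k) * g j (traj f x ρ (l + k)) ∈ S x :=
          ⟨ρ, hρD, l + k, j, rfl⟩
        have h3 := le_csSup (hSbd x) this
        rw [htail, pow_add, mul_assoc] at h3
        exact h3.trans_eq (hV x).symm
      have h4 : valueFun f D g α y ≤ valueFun f D g α x / α ^ l := by
        rw [hV y]
        apply csSup_le (hSne y)
        intro w hw
        rw [le_div_iff₀ (pow_pos hαpos l), mul_comm]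
        exact key w hw
      calc α ^ l * valueFun f D g α y
          ≤ α ^ l * (valueFun f D g α x / α ^ l) :=
            mul_le_mul_of_nonneg_left h4 (pow_pos hαpos l).le
        _ = valueFun f D g α x := by
            field_simp
    · exact le_csSup (hSbd x) ⟨π, hπ, i, j, rfl⟩
end

section
/- The value function V is a bounded solution of the Bellman equation: for every x ∈ ℝⁿ, V(x) = max( α · sup_{d ∈ D} V(f(x,d)), max_{1 ≤ j ≤ n₀} g_j(x) ) (equivalently, min{ inf_{d ∈ D} (V(x) − α·V(f(x,d))), V(x) − max_j g_j(x) } = 0), and −1 ≤ V(x) ≤ 1 for all x. -/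
lemma traj_shift {n m : ℕ} (f : (Fin n → ℝ) → (Fin m → ℝ) → (Fin n → ℝ))
    (x : Fin n → ℝ) (π : ℕ → Fin m → ℝ) : ∀ l,
    traj f (f x (π 0)) (fun i => π (i + 1)) l = traj f x π (l + 1)
  | 0 => rfl
  | l + 1 => by
      show f (traj f (f x (π 0)) (fun i => π (i + 1)) l) (π (l + 1))
        = f (traj f x π (l + 1)) (π (l + 1))
      rw [traj_shift f x π l]

/-- the value function `V` is a bounded solution of the Bellman
equation `V(x) = max( α · sup_{d ∈ D} V(f(x,d)), max_{1 ≤ j ≤ n₀} g_j(x) )`,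
with `−1 ≤ V(x) ≤ 1` for all `x`. -/
theorem valueFun_solves_bellman {n m n₀ : ℕ} (hn₀ : 1 ≤ n₀)
    (f : (Fin n → ℝ) → (Fin m → ℝ) → (Fin n → ℝ))
    (D : Set (Fin m → ℝ)) (hD : D.Nonempty)
    (g : Fin n₀ → (Fin n → ℝ) → ℝ)
    (hg : ∀ (j : Fin n₀) (x : Fin n → ℝ), -1 < g j x ∧ g j x < 1)
    (α : ℝ) (hα : α ∈ Set.Ioc (0 : ℝ) 1) :
    (∀ x : Fin n → ℝ,
      valueFun f D g α x =
        max (α * sSup {v : ℝ | ∃ d ∈ D, v = valueFun f D g α (f x d)})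
          (⨆ j : Fin n₀, g j x)) ∧
    (∀ x : Fin n → ℝ, -1 ≤ valueFun f D g α x ∧ valueFun f D g α x ≤ 1) := by
  obtain ⟨hα0, hα1⟩ := hα
  obtain ⟨d₀, hd₀⟩ := hD
  haveI : Nonempty (Fin n₀) := ⟨⟨0, hn₀⟩⟩
  set j₀ : Fin n₀ := ⟨0, hn₀⟩ with hj₀
  set S : (Fin n → ℝ) → Set ℝ := fun x =>
    {v : ℝ | ∃ π : ℕ → Fin m → ℝ, (∀ i, π i ∈ D) ∧
      ∃ l : ℕ, ∃ j : Fin n₀, v = α ^ l * g j (traj f x π l)} with hS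
  have hVdef : ∀ x, valueFun f D g α x = sSup (S x) := fun x => rfl
  have hub : ∀ x, ∀ v ∈ S x, v ≤ 1 := by
    rintro x v ⟨π, hπ, l, j, rfl⟩
    have h1 := (hg j (traj f x π l)).2
    have h2 : (0:ℝ) ≤ α ^ l := pow_nonneg hα0.le l
    have h3 : α ^ l ≤ 1 := pow_le_one₀ hα0.le hα1
    nlinarith
  have hbdd : ∀ x, BddAbove (S x) := fun x => ⟨1, hub x⟩
  have hmem : ∀ x (j : Fin n₀), g j x ∈ S x := by
    intro x j
    exact ⟨fun _ => d₀, fun _ => hd₀, 0, j, by simp [traj]⟩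
  have hne : ∀ x, (S x).Nonempty := fun x => ⟨g j₀ x, hmem x j₀⟩
  have hV1 : ∀ x, valueFun f D g α x ≤ 1 := fun x => csSup_le (hne x) (hub x)
  have hVlo : ∀ x, -1 ≤ valueFun f D g α x := fun x =>
    le_trans (hg j₀ x).1.le (le_csSup (hbdd x) (hmem x j₀))
  refine ⟨?_, fun x => ⟨hVlo x, hV1 x⟩⟩
  intro x
  set T : Set ℝ := {v : ℝ | ∃ d ∈ D, v = valueFun f D g α (f x d)} with hT
  have hTne : T.Nonempty := ⟨valueFun f D g α (f x d₀), d₀, hd₀, rfl⟩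
  have hTbdd : BddAbove T := by
    refine ⟨1, ?_⟩
    rintro v ⟨d, hd, rfl⟩
    exact hV1 _
  apply le_antisymm
  · rw [hVdef]
    apply csSup_le (hne x)
    rintro v ⟨π, hπ, l, j, rfl⟩
    match l with
    | 0 =>
      have : (α:ℝ) ^ 0 * g j (traj f x π 0) = g j x := by simp [traj]
      rw [this]
      exact le_max_of_le_right (le_ciSup (f := fun j => g j x) (Set.Finite.bddAbove (Set.finite_range _)) j)
    | l + 1 =>
      have heq : α ^ (l + 1) * g j (traj f x π (l + 1))
          = α * (α ^ l * g j (traj f (f x (π 0)) (fun i => π (i + 1)) l)) := by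
        rw [traj_shift]; ring
      rw [heq]
      have h1 : α ^ l * g j (traj f (f x (π 0)) (fun i => π (i + 1)) l)
          ≤ valueFun f D g α (f x (π 0)) := by
        rw [hVdef]
        exact le_csSup (hbdd _) ⟨fun i => π (i + 1), fun i => hπ _, l, j, rfl⟩
      have h2 : valueFun f D g α (f x (π 0)) ≤ sSup T :=
        le_csSup hTbdd ⟨π 0, hπ 0, rfl⟩
      exact le_max_of_le_left (by nlinarith)
  · apply max_le
    · rw [mul_comm, ← le_div_iff₀ hα0]
      apply csSup_le hTne
      rintro v ⟨d, hd, rfl⟩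
      rw [hVdef]
      apply csSup_le (hne _)
      rintro w ⟨π, hπ, l, j, rfl⟩
      rw [le_div_iff₀ hα0]
      set π' : ℕ → Fin m → ℝ := fun i => match i with | 0 => d | k + 1 => π k with hπ'
      have hshift : traj f (f x d) π l = traj f x π' (l + 1) := by
        have : (fun i => π' (i + 1)) = π := rfl
        rw [← traj_shift f x π' l, this]
      have : α ^ l * g j (traj f (f x d) π l) * α
          = α ^ (l + 1) * g j (traj f x π' (l + 1)) := by
        rw [hshift]; ring
      rw [this, hVdef]
      refine le_csSup (hbdd x) ⟨π', ?_, l + 1, j, rfl⟩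
      intro i
      match i with
      | 0 => exact hd
      | k + 1 => exact hπ k
    · exact ciSup_le fun j => le_csSup (hbdd x) (hmem x j)
end

section
/- Gap-amplification step in the uniqueness proof: suppose α ∈ (0,1) and U, W : ℝⁿ → ℝ are bounded functions each satisfying the Bellman equation H(x) = max( α · sup_{d ∈ D} H(f(x,d)), max_{1 ≤ j ≤ n₀} g_j(x) ) for all x ∈ ℝⁿ. If y ∈ ℝⁿ satisfies W(y) − U(y) = δ with δ > 0, then for every β with 1 < β < 1/α there exists d₁ ∈ D such that W(f(y,d₁)) − U(f(y,d₁)) ≥ β·δ. -/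
/-- gap-amplification step in the uniqueness proof: for
`α ∈ (0,1)`, if bounded `U, W : ℝⁿ → ℝ` both satisfy the Bellman equation
`H(x) = max( α · sup_{d ∈ D} H(f(x,d)), max_{1 ≤ j ≤ n₀} g_j(x) )` and
`W(y) − U(y) = δ > 0`, then for every `β` with `1 < β < 1/α` there is
`d₁ ∈ D` with `W(f(y,d₁)) − U(f(y,d₁)) ≥ β·δ`. -/
theorem bellman_gap_amplification {n m n₀ : ℕ} (hn₀ : 1 ≤ n₀)
    (f : (Fin n → ℝ) → (Fin m → ℝ) → (Fin n → ℝ))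
    (D : Set (Fin m → ℝ)) (hD : D.Nonempty)
    (g : Fin n₀ → (Fin n → ℝ) → ℝ)
    (hg : ∀ (j : Fin n₀) (x : Fin n → ℝ), -1 < g j x ∧ g j x < 1)
    (α : ℝ) (hα : α ∈ Set.Ioo (0 : ℝ) 1)
    (U W : (Fin n → ℝ) → ℝ)
    (hUbdd : ∃ C : ℝ, ∀ x : Fin n → ℝ, |U x| ≤ C)
    (hWbdd : ∃ C : ℝ, ∀ x : Fin n → ℝ, |W x| ≤ C)
    (hUeq : ∀ x : Fin n → ℝ,
      U x = max (α * sSup {v : ℝ | ∃ d ∈ D, v = U (f x d)})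
        (⨆ j : Fin n₀, g j x))
    (hWeq : ∀ x : Fin n → ℝ,
      W x = max (α * sSup {v : ℝ | ∃ d ∈ D, v = W (f x d)})
        (⨆ j : Fin n₀, g j x))
    (y : Fin n → ℝ) (δ : ℝ) (hδ : 0 < δ) (hgap : W y - U y = δ)
    (β : ℝ) (hβ1 : 1 < β) (hβ2 : β < 1 / α) :
    ∃ d₁ ∈ D, W (f y d₁) - U (f y d₁) ≥ β * δ := by
  obtain ⟨hα0, hα1⟩ := hα
  obtain ⟨CU, hCU⟩ := hUbdd
  obtain ⟨CW, hCW⟩ := hWbdd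
  set SW := sSup {v : ℝ | ∃ d ∈ D, v = W (f y d)} with hSWdef
  set SU := sSup {v : ℝ | ∃ d ∈ D, v = U (f y d)} with hSUdef
  set G := ⨆ j : Fin n₀, g j y with hGdef
  obtain ⟨d₀, hd₀⟩ := hD
  have hWne : {v : ℝ | ∃ d ∈ D, v = W (f y d)}.Nonempty := ⟨W (f y d₀), d₀, hd₀, rfl⟩
  have hUne : {v : ℝ | ∃ d ∈ D, v = U (f y d)}.Nonempty := ⟨U (f y d₀), d₀, hd₀, rfl⟩
  have hWbd : BddAbove {v : ℝ | ∃ d ∈ D, v = W (f y d)} := by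
    refine ⟨CW, ?_⟩
    rintro v ⟨d, hd, rfl⟩
    exact le_trans (le_abs_self _) (hCW _)
  have hUbd : BddAbove {v : ℝ | ∃ d ∈ D, v = U (f y d)} := by
    refine ⟨CU, ?_⟩
    rintro v ⟨d, hd, rfl⟩
    exact le_trans (le_abs_self _) (hCU _)
  have hUW : U y < W y := by linarith
  have hUG : G ≤ U y := by rw [hUeq y]; exact le_max_right _ _
  -- W y = α * SW
  have hWy : W y = α * SW := by
    rcases max_choice (α * SW) G with h | h
    · rw [hWeq y, h]
    · exfalso
      have : W y = G := by rw [hWeq y, h]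
      linarith
  have hUSU : α * SU ≤ U y := by rw [hUeq y]; exact le_max_left _ _
  have hgap2 : δ ≤ α * (SW - SU) := by
    have : α * SW - α * SU ≥ δ := by linarith
    linarith [this, mul_sub α SW SU]
  have hSWSU : δ / α ≤ SW - SU := by
    rw [div_le_iff₀ hα0] at *
    nlinarith
  have hε : 0 < δ / α - β * δ := by
    have h1 : β * α < 1 := (lt_div_iff₀ hα0).mp hβ2
    have h2 : β * δ < δ / α := by
      rw [lt_div_iff₀ hα0]; nlinarith
    linarith
  have hlt : SW - (δ / α - β * δ) < SW := by linarith
  obtain ⟨v, hv, hvlt⟩ := exists_lt_of_lt_csSup hWne hlt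
  obtain ⟨d₁, hd₁, rfl⟩ := hv
  refine ⟨d₁, hd₁, ?_⟩
  have hU1 : U (f y d₁) ≤ SU := le_csSup hUbd ⟨d₁, hd₁, rfl⟩
  linarith
end

section
/- Value-iteration convergence: suppose α ∈ (0,1). Let V₀ : ℝⁿ → ℝ be any bounded function and define recursively V_{i+1}(x) = max( α · sup_{d ∈ D} V_i(f(x,d)), max_{1 ≤ j ≤ n₀} g_j(x) ) for all x ∈ ℝⁿ and i ∈ ℕ. Then the sequence (V_i) converges uniformly on ℝⁿ to the value function V; that is, for every ε > 0 there exists N ∈ ℕ such that |V_i(x) − V(x)| ≤ ε for all i ≥ N and all x ∈ ℝⁿ. -/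
open Set

theorem traj_succ_eq_traj_tail {n m : ℕ} (f : (Fin n → ℝ) → (Fin m → ℝ) → (Fin n → ℝ))
    (x : Fin n → ℝ) (π : ℕ → Fin m → ℝ) (l : ℕ) :
    traj f x π (l + 1) = traj f (f x (π 0)) (fun k => π (k + 1)) l := by
  induction l with
  | zero => rfl
  | succ l ih => exact congrArg (f · (π (l + 1))) ih

theorem mul_csSup_le {s : Set ℝ} {a b : ℝ} (hs : s.Nonempty) (ha : 0 ≤ a)
    (h : ∀ v ∈ s, a * v ≤ b) : a * sSup s ≤ b := by
  rw [← smul_eq_mul, ← Real.sSup_smul_of_nonneg ha]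
  exact csSup_le hs.smul_set (by rintro _ ⟨v, hv, rfl⟩; exact h v hv)

theorem abs_csSup_image_sub_csSup_image_le {β : Type*} {s : Set β} {u w : β → ℝ} {c : ℝ}
    (hs : s.Nonempty) (hw : BddAbove (w '' s)) (h : ∀ y ∈ s, |u y - w y| ≤ c) :
    |sSup (u '' s) - sSup (w '' s)| ≤ c := by
  have hu : BddAbove (u '' s) := by
    obtain ⟨B, hB⟩ := hw
    refine ⟨B + c, ?_⟩
    rintro _ ⟨y, hy, rfl⟩
    linarith [hB (mem_image_of_mem w hy), (abs_le.1 (h y hy)).2]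
  rw [abs_sub_le_iff, sub_le_iff_le_add, sub_le_iff_le_add]
  constructor
  · refine csSup_le (hs.image u) ?_
    rintro _ ⟨y, hy, rfl⟩
    linarith [le_csSup hw (mem_image_of_mem w hy), (abs_le.1 (h y hy)).2]
  · refine csSup_le (hs.image w) ?_
    rintro _ ⟨y, hy, rfl⟩
    linarith [le_csSup hu (mem_image_of_mem u hy), (abs_le.1 (h y hy)).1]

noncomputable def bellman {X U ι : Type*} (f : X → U → X) (D : Set U) (g : ι → X → ℝ)
    (α : ℝ) (u : X → ℝ) (x : X) : ℝ :=
  max (α * sSup ((fun d => u (f x d)) '' D)) (⨆ j, g j x)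

theorem abs_bellman_sub_bellman_le {X U ι : Type*} {f : X → U → X} {D : Set U}
    {g : ι → X → ℝ} {α c : ℝ} {u w : X → ℝ} (hD : D.Nonempty) (hα : 0 ≤ α)
    (hw : BddAbove (range w)) (huw : ∀ y, |u y - w y| ≤ c) (x : X) :
    |bellman f D g α u x - bellman f D g α w x| ≤ α * c := by
  have hw' : BddAbove ((fun d => w (f x d)) '' D) :=
    hw.mono (by rintro _ ⟨d, -, rfl⟩; exact mem_range_self _)
  calc |bellman f D g α u x - bellman f D g α w x|
      ≤ |α * sSup ((fun d => u (f x d)) '' D) - α * sSup ((fun d => w (f x d)) '' D)| :=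
        abs_max_sub_max_le_abs _ _ _
    _ = α * |sSup ((fun d => u (f x d)) '' D) - sSup ((fun d => w (f x d)) '' D)| := by
        rw [← mul_sub, abs_mul, abs_of_nonneg hα]
    _ ≤ α * c :=
        mul_le_mul_of_nonneg_left
          (abs_csSup_image_sub_csSup_image_le hD hw' fun d _ => huw (f x d)) hα

theorem uniform_approx_of_abs_sub_le_geometric {X : Type*} {u : ℕ → X → ℝ} {v : X → ℝ}
    {a K : ℝ} (ha₀ : 0 ≤ a) (ha₁ : a < 1) (h : ∀ i x, |u i x - v x| ≤ a ^ i * K) :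
    ∀ ε > (0 : ℝ), ∃ N : ℕ, ∀ i ≥ N, ∀ x, |u i x - v x| ≤ ε := by
  intro ε hε
  have hlim : Filter.Tendsto (fun i => a ^ i * K) Filter.atTop (nhds 0) := by
    simpa using (tendsto_pow_atTop_nhds_zero_of_lt_one ha₀ ha₁).mul_const K
  obtain ⟨N, hN⟩ := Filter.eventually_atTop.1 (hlim.eventually (Iic_mem_nhds hε))
  exact ⟨N, fun i hi x => (h i x).trans (hN i hi)⟩

section ValueFunction

variable {n m n₀ : ℕ} {f : (Fin n → ℝ) → (Fin m → ℝ) → (Fin n → ℝ)} {D : Set (Fin m → ℝ)}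
  {g : Fin n₀ → (Fin n → ℝ) → ℝ} {α : ℝ}

def rewardSet (f : (Fin n → ℝ) → (Fin m → ℝ) → (Fin n → ℝ)) (D : Set (Fin m → ℝ))
    (g : Fin n₀ → (Fin n → ℝ) → ℝ) (α : ℝ) (x : Fin n → ℝ) : Set ℝ :=
  {v : ℝ | ∃ π : ℕ → Fin m → ℝ, (∀ i, π i ∈ D) ∧
    ∃ l : ℕ, ∃ j : Fin n₀, v = α ^ l * g j (traj f x π l)}

theorem valueFun_eq_sSup_rewardSet (x : Fin n → ℝ) :
    valueFun f D g α x = sSup (rewardSet f D g α x) :=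
  rfl

theorem mem_rewardSet_iff (hD : D.Nonempty) {x : Fin n → ℝ} {v : ℝ} :
    v ∈ rewardSet f D g α x ↔
      (∃ j, v = g j x) ∨ ∃ d ∈ D, ∃ w ∈ rewardSet f D g α (f x d), v = α * w := by
  constructor
  · rintro ⟨π, hπ, l | l, j, rfl⟩
    · exact Or.inl ⟨j, by simp [traj]⟩
    · refine Or.inr ⟨π 0, hπ 0, _, ⟨fun k => π (k + 1), fun k => hπ (k + 1), l, j, rfl⟩,
        ?_⟩
      rw [traj_succ_eq_traj_tail, pow_succ', mul_assoc]
  · rintro (⟨j, rfl⟩ | ⟨d, hd, _, ⟨π, hπ, l, j, rfl⟩, rfl⟩)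
    · obtain ⟨d, hd⟩ := hD
      exact ⟨fun _ => d, fun _ => hd, 0, j, by simp [traj]⟩
    · have htraj : traj f x (fun k => Nat.casesOn k d π) (l + 1) = traj f (f x d) π l :=
        traj_succ_eq_traj_tail f x _ l
      refine ⟨fun k => Nat.casesOn k d π, ?_, l + 1, j, ?_⟩
      · rintro (_ | k)
        exacts [hd, hπ k]
      · rw [htraj, pow_succ', mul_assoc]

theorem apply_mem_rewardSet (hD : D.Nonempty) (j : Fin n₀) (x : Fin n → ℝ) :
    g j x ∈ rewardSet f D g α x :=
  (mem_rewardSet_iff hD).2 (Or.inl ⟨j, rfl⟩)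

theorem le_one_of_mem_rewardSet (hg : ∀ j x, |g j x| ≤ 1) (hα : α ∈ Icc 0 1)
    {x : Fin n → ℝ} {v : ℝ} (hv : v ∈ rewardSet f D g α x) : v ≤ 1 := by
  obtain ⟨π, -, l, j, rfl⟩ := hv
  calc α ^ l * g j (traj f x π l) ≤ |α ^ l * g j (traj f x π l)| := le_abs_self _
    _ = α ^ l * |g j (traj f x π l)| := by rw [abs_mul, abs_of_nonneg (pow_nonneg hα.1 l)]
    _ ≤ 1 := mul_le_one₀ (pow_le_one₀ hα.1 hα.2) (abs_nonneg _) (hg j _)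

theorem bddAbove_rewardSet (hg : ∀ j x, |g j x| ≤ 1) (hα : α ∈ Icc 0 1) (x : Fin n → ℝ) :
    BddAbove (rewardSet f D g α x) :=
  ⟨1, fun _ => le_one_of_mem_rewardSet hg hα⟩

theorem abs_valueFun_le_one [Nonempty (Fin n₀)] (hD : D.Nonempty) (hg : ∀ j x, |g j x| ≤ 1)
    (hα : α ∈ Icc 0 1) (x : Fin n → ℝ) : |valueFun f D g α x| ≤ 1 := by
  obtain ⟨j⟩ := ‹Nonempty (Fin n₀)›
  have hgj : g j x ∈ rewardSet f D g α x := apply_mem_rewardSet hD j x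
  rw [valueFun_eq_sSup_rewardSet, abs_le]
  exact ⟨(abs_le.1 (hg j x)).1.trans (le_csSup (bddAbove_rewardSet hg hα x) hgj),
    csSup_le ⟨_, hgj⟩ fun _ => le_one_of_mem_rewardSet hg hα⟩

theorem bddAbove_range_valueFun [Nonempty (Fin n₀)] (hD : D.Nonempty)
    (hg : ∀ j x, |g j x| ≤ 1) (hα : α ∈ Icc 0 1) : BddAbove (range (valueFun f D g α)) :=
  ⟨1, by rintro _ ⟨x, rfl⟩; exact (abs_le.1 (abs_valueFun_le_one hD hg hα x)).2⟩

theorem bellman_valueFun [Nonempty (Fin n₀)] (hD : D.Nonempty) (hg : ∀ j x, |g j x| ≤ 1)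
    (hα : α ∈ Icc 0 1) (x : Fin n → ℝ) :
    bellman f D g α (valueFun f D g α) x = valueFun f D g α x := by
  obtain ⟨j₀⟩ := ‹Nonempty (Fin n₀)›
  have hbdd := bddAbove_rewardSet (f := f) (D := D) hg hα
  apply le_antisymm
  · refine max_le (mul_csSup_le (hD.image _) hα.1 ?_) (ciSup_le fun j => ?_)
    · rintro _ ⟨d, hd, rfl⟩
      refine mul_csSup_le ⟨_, apply_mem_rewardSet hD j₀ _⟩ hα.1 fun w hw => ?_
      exact le_csSup (hbdd x) ((mem_rewardSet_iff hD).2 (Or.inr ⟨d, hd, w, hw, rfl⟩))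
    · exact le_csSup (hbdd x) (apply_mem_rewardSet hD j x)
  · refine csSup_le ⟨_, apply_mem_rewardSet hD j₀ x⟩ fun v hv => ?_
    rcases (mem_rewardSet_iff hD).1 hv with ⟨j, rfl⟩ | ⟨d, hd, w, hw, rfl⟩
    · exact le_max_of_le_right (le_ciSup (finite_range (g · x)).bddAbove j)
    · have hnext : BddAbove ((fun d => valueFun f D g α (f x d)) '' D) :=
        (bddAbove_range_valueFun hD hg hα).mono (image_subset_iff.2 fun _ _ => mem_range_self _)
      refine le_max_of_le_left (mul_le_mul_of_nonneg_left ?_ hα.1)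
      exact (le_csSup (hbdd _) hw).trans (le_csSup hnext ⟨d, hd, rfl⟩)

end ValueFunction

/-- value-iteration convergence: for `α ∈ (0,1)`, if `V₀` is any
bounded function and `V_{i+1}(x) = max( α · sup_{d ∈ D} V_i(f(x,d)),
max_{1 ≤ j ≤ n₀} g_j(x) )`, then `(V_i)` converges uniformly on `ℝⁿ` to the
value function `V`. -/
theorem value_iteration_uniform_convergence {n m n₀ : ℕ} (hn₀ : 1 ≤ n₀)
    (f : (Fin n → ℝ) → (Fin m → ℝ) → (Fin n → ℝ))
    (D : Set (Fin m → ℝ)) (hD : D.Nonempty)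
    (g : Fin n₀ → (Fin n → ℝ) → ℝ)
    (hg : ∀ (j : Fin n₀) (x : Fin n → ℝ), -1 < g j x ∧ g j x < 1)
    (α : ℝ) (hα : α ∈ Set.Ioo (0 : ℝ) 1)
    (VI : ℕ → (Fin n → ℝ) → ℝ)
    (hV0bdd : ∃ C : ℝ, ∀ x : Fin n → ℝ, |VI 0 x| ≤ C)
    (hrec : ∀ (i : ℕ) (x : Fin n → ℝ),
      VI (i + 1) x = max (α * sSup {v : ℝ | ∃ d ∈ D, v = VI i (f x d)})
        (⨆ j : Fin n₀, g j x)) :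
    ∀ ε > (0 : ℝ), ∃ N : ℕ, ∀ i ≥ N, ∀ x : Fin n → ℝ,
      |VI i x - valueFun f D g α x| ≤ ε := by
  obtain ⟨C, hC⟩ := hV0bdd
  have : Nonempty (Fin n₀) := ⟨⟨0, hn₀⟩⟩
  have hg₁ : ∀ j x, |g j x| ≤ 1 := fun j x => abs_le.2 ⟨(hg j x).1.le, (hg j x).2.le⟩
  have hα' : α ∈ Icc 0 1 := Ioo_subset_Icc_self hα
  have hVI : ∀ i, VI (i + 1) = bellman f D g α (VI i) := fun i => funext fun x => by
    rw [hrec, bellman]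
    congr 3
    ext v
    simp [eq_comm]
  have hdist : ∀ i x, |VI i x - valueFun f D g α x| ≤ α ^ i * (C + 1) := by
    intro i
    induction i with
    | zero =>
      intro x
      simpa using (abs_sub _ _).trans (add_le_add (hC x) (abs_valueFun_le_one hD hg₁ hα' x))
    | succ i ih =>
      intro x
      rw [hVI, ← bellman_valueFun hD hg₁ hα' x, pow_succ', mul_assoc]
      exact abs_bellman_sub_bellman_le hD hα'.1 (bddAbove_range_valueFun hD hg₁ hα') ih x
  exact uniform_approx_of_abs_sub_le_geometric hα'.1 hα.2 hdist
end

section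
/- Sufficient condition for a robust invariant set: let α ∈ (0,1] and let u : ℝⁿ → ℝ satisfy (i) u(x) − α·u(f(x,d)) ≥ 0 for all d ∈ D and all x ∈ ℝⁿ, and (ii) u(x) − g_j(x) ≥ 0 for all x ∈ ℝⁿ and all j ∈ {1,…,n₀}. Then {x ∈ ℝⁿ | u(x) ≤ 0} ⊆ R₀; that is, every trajectory starting in {x | u(x) ≤ 0} remains in the state constraint set X₀ for all times under every input policy. -/
/-- sufficient condition for a robust invariant set: for
`α ∈ (0,1]`, if `u : ℝⁿ → ℝ` satisfies `u(x) − α·u(f(x,d)) ≥ 0` for all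
`d ∈ D`, `x ∈ ℝⁿ` and `u(x) − g_j(x) ≥ 0` for all `x`, `j`, then
`{x | u(x) ≤ 0} ⊆ R₀`: every trajectory starting in `{x | u(x) ≤ 0}` remains
in `X₀` forever under every input policy. -/
theorem sublevel_subset_maxRobustInv {n m n₀ : ℕ} (hn₀ : 1 ≤ n₀)
    (f : (Fin n → ℝ) → (Fin m → ℝ) → (Fin n → ℝ))
    (D : Set (Fin m → ℝ)) (hD : D.Nonempty)
    (g : Fin n₀ → (Fin n → ℝ) → ℝ)
    (hg : ∀ (j : Fin n₀) (x : Fin n → ℝ), -1 < g j x ∧ g j x < 1)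
    (α : ℝ) (hα : α ∈ Set.Ioc (0 : ℝ) 1)
    (u : (Fin n → ℝ) → ℝ)
    (hu1 : ∀ d ∈ D, ∀ x : Fin n → ℝ, u x - α * u (f x d) ≥ 0)
    (hu2 : ∀ (x : Fin n → ℝ) (j : Fin n₀), u x - g j x ≥ 0) :
    {x : Fin n → ℝ | u x ≤ 0} ⊆ maxRobustInv f D g := by
  intro x hx π hπ l j
  have key : ∀ l, u (traj f x π l) ≤ 0 := by
    intro l
    induction l with
    | zero => exact hx
    | succ k ih =>
      have h := hu1 (π k) (hπ k) (traj f x π k)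
      have : α * u (f (traj f x π k) (π k)) ≤ u (traj f x π k) := by linarith
      have := this.trans ih
      show u (f (traj f x π k) (π k)) ≤ 0
      nlinarith [hα.1]
  have := hu2 (traj f x π l) j
  have := key l
  linarith
end

section
/- Nonnegativity of the certificate when α < 1: let α ∈ (0,1) and let u : ℝⁿ → ℝ satisfy (i) u(x) − α·u(f(x,d)) ≥ 0 for all d ∈ D and all x ∈ ℝⁿ, and (ii) u(x) − g_j(x) ≥ 0 for all x ∈ ℝⁿ and all j ∈ {1,…,n₀}, where D is nonempty. Then u(x) ≥ 0 for all x ∈ ℝⁿ, and consequently {x ∈ ℝⁿ | u(x) ≤ 0} = {x ∈ ℝⁿ | u(x) = 0}. -/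
/-- nonnegativity of the certificate when `α < 1`: for
`α ∈ (0,1)` and nonempty `D`, if `u : ℝⁿ → ℝ` satisfies
`u(x) − α·u(f(x,d)) ≥ 0` for all `d ∈ D`, `x ∈ ℝⁿ` and `u(x) − g_j(x) ≥ 0`
for all `x`, `j`, then `u(x) ≥ 0` everywhere and consequently
`{x | u(x) ≤ 0} = {x | u(x) = 0}`. -/
theorem certificate_nonneg {n m n₀ : ℕ} (hn₀ : 1 ≤ n₀)
    (f : (Fin n → ℝ) → (Fin m → ℝ) → (Fin n → ℝ))
    (D : Set (Fin m → ℝ)) (hD : D.Nonempty)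
    (g : Fin n₀ → (Fin n → ℝ) → ℝ)
    (hg : ∀ (j : Fin n₀) (x : Fin n → ℝ), -1 < g j x ∧ g j x < 1)
    (α : ℝ) (hα : α ∈ Set.Ioo (0 : ℝ) 1)
    (u : (Fin n → ℝ) → ℝ)
    (hu1 : ∀ d ∈ D, ∀ x : Fin n → ℝ, u x - α * u (f x d) ≥ 0)
    (hu2 : ∀ (x : Fin n → ℝ) (j : Fin n₀), u x - g j x ≥ 0) :
    (∀ x : Fin n → ℝ, 0 ≤ u x) ∧
      {x : Fin n → ℝ | u x ≤ 0} = {x : Fin n → ℝ | u x = 0} := by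
  obtain ⟨d, hd⟩ := hD
  obtain ⟨hα0, hα1⟩ := hα
  have j0 : Fin n₀ := ⟨0, hn₀⟩
  have hlb : ∀ k : ℕ, ∀ x, -α ^ k ≤ u x := by
    intro k
    induction k with
    | zero =>
      intro x
      have h1 := (hg j0 x).1
      have h2 := hu2 x j0
      simp only [pow_zero]
      linarith
    | succ k ih =>
      intro x
      have h1 := hu1 d hd x
      have h2 := ih (f x d)
      have := mul_le_mul_of_nonneg_left h2 hα0.le
      rw [pow_succ]
      nlinarith
  have hnn : ∀ x, 0 ≤ u x := by
    intro x
    have : Filter.Tendsto (fun k : ℕ => -α ^ k) Filter.atTop (nhds 0) := by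
      simpa using (tendsto_pow_atTop_nhds_zero_of_lt_one hα0.le hα1).neg
    exact le_of_tendsto this (Filter.Eventually.of_forall fun k => hlb k x)
  refine ⟨hnn, ?_⟩
  ext x
  simp only [Set.mem_setOf_eq]
  exact ⟨fun h => le_antisymm h (hnn x), fun h => h.le⟩
end

section
/- Analytic content of the semi-definite program certificate: let α ∈ (0,1], let h_1, …, h_{n₀} : ℝⁿ → ℝ, and let X₀ = {x ∈ ℝⁿ | h_j(x) ≤ 0 for all j}. Let B ⊆ ℝⁿ satisfy X₀ ⊆ B and f(x,d) ∈ B for every x ∈ X₀ and d ∈ D (i.e., the one-step reachable set Ω(X₀) = {f(x,d) | x ∈ X₀, d ∈ D} ∪ X₀ is contained in B). Suppose u : ℝⁿ → ℝ satisfies (i) u(x) − α·u(f(x,d)) ≥ 0 for all x ∈ B and d ∈ D, and (ii) (1 + h_j(x)²)·u(x) − h_j(x) ≥ 0 for all x ∈ ℝⁿ and all j. Then every trajectory starting from a point of {x ∈ B | u(x) ≤ 0} remains in {x ∈ B | u(x) ≤ 0} for all times under every input policy; in particular {x ∈ B | u(x) ≤ 0} ⊆ R₀, i.e., it is a robust invariant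 set. -/
/-- The maximal robust invariant set for the state constraint set
`X₀ = {x | ∀ j, h_j(x) ≤ 0}`. -/
def maxRobustInvOf {n m n₀ : ℕ} (f : (Fin n → ℝ) → (Fin m → ℝ) → (Fin n → ℝ))
    (D : Set (Fin m → ℝ)) (h : Fin n₀ → (Fin n → ℝ) → ℝ) : Set (Fin n → ℝ) :=
  {x | ∀ π : ℕ → Fin m → ℝ, (∀ i, π i ∈ D) →
    ∀ l : ℕ, traj f x π l ∈ {y | ∀ j : Fin n₀, h j y ≤ 0}}

/-- analytic content of the SDP certificate: with `α ∈ (0,1]`,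
`X₀ = {x | ∀ j, h_j(x) ≤ 0}`, `B ⊇ X₀` absorbing the one-step reachable set of
`X₀`, and `u` satisfying `u(x) − α·u(f(x,d)) ≥ 0` on `B × D` and
`(1 + h_j(x)²)·u(x) − h_j(x) ≥ 0` on `ℝⁿ`, every trajectory starting in
`{x ∈ B | u(x) ≤ 0}` stays in that set forever, under every input policy;
in particular `{x ∈ B | u(x) ≤ 0} ⊆ R₀` is a robust invariant set. -/
theorem sdp_certificate_invariant {n m n₀ : ℕ} (hn₀ : 1 ≤ n₀)
    (f : (Fin n → ℝ) → (Fin m → ℝ) → (Fin n → ℝ))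
    (D : Set (Fin m → ℝ)) (hD : D.Nonempty)
    (h : Fin n₀ → (Fin n → ℝ) → ℝ)
    (α : ℝ) (hα : α ∈ Set.Ioc (0 : ℝ) 1)
    (B : Set (Fin n → ℝ))
    (hX₀B : {x : Fin n → ℝ | ∀ j : Fin n₀, h j x ≤ 0} ⊆ B)
    (hreach : ∀ x ∈ {x : Fin n → ℝ | ∀ j : Fin n₀, h j x ≤ 0},
      ∀ d ∈ D, f x d ∈ B)
    (u : (Fin n → ℝ) → ℝ)
    (hu1 : ∀ x ∈ B, ∀ d ∈ D, u x - α * u (f x d) ≥ 0)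
    (hu2 : ∀ (x : Fin n → ℝ) (j : Fin n₀), (1 + (h j x) ^ 2) * u x - h j x ≥ 0) :
    (∀ x₀ ∈ {x ∈ B | u x ≤ 0}, ∀ π : ℕ → Fin m → ℝ, (∀ i, π i ∈ D) →
      ∀ l : ℕ, traj f x₀ π l ∈ {x ∈ B | u x ≤ 0}) ∧
    {x ∈ B | u x ≤ 0} ⊆ maxRobustInvOf f D h := by
  have hα0 : 0 < α := hα.1
  -- from hu2: u x ≤ 0 implies h j x ≤ 0
  have hX : ∀ x : Fin n → ℝ, u x ≤ 0 → ∀ j : Fin n₀, h j x ≤ 0 := by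
    intro x hux j
    have h2 := hu2 x j
    have hpos : (0:ℝ) < 1 + (h j x) ^ 2 := by positivity
    nlinarith [mul_nonpos_of_nonneg_of_nonpos hpos.le hux]
  have hstep : ∀ x : Fin n → ℝ, x ∈ B → u x ≤ 0 → ∀ d ∈ D,
      f x d ∈ B ∧ u (f x d) ≤ 0 := by
    intro x hxB hux d hd
    refine ⟨hreach x (hX x hux) d hd, ?_⟩
    have h1 := hu1 x hxB d hd
    nlinarith
  have main : ∀ x₀ ∈ {x ∈ B | u x ≤ 0}, ∀ π : ℕ → Fin m → ℝ, (∀ i, π i ∈ D) →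
      ∀ l : ℕ, traj f x₀ π l ∈ {x ∈ B | u x ≤ 0} := by
    intro x₀ hx₀ π hπ l
    induction l with
    | zero => exact hx₀
    | succ l ih =>
      exact hstep _ ih.1 ih.2 (π l) (hπ l)
  refine ⟨main, ?_⟩
  intro x hx π hπ l j
  exact hX _ (main x hx π hπ l).2 j
end

section
/- Nonnegativity on B of the semi-definite program certificate when α < 1: let α ∈ (0,1), let h_1, …, h_{n₀} : ℝⁿ → ℝ, and let X₀ = {x ∈ ℝⁿ | h_j(x) ≤ 0 for all j}. Let B ⊆ ℝⁿ satisfy X₀ ⊆ B and f(x,d) ∈ B for every x ∈ X₀ and d ∈ D, with D nonempty. Suppose u : ℝⁿ → ℝ satisfies (i) u(x) − α·u(f(x,d)) ≥ 0 for all x ∈ B and d ∈ D, and (ii) (1 + h_j(x)²)·u(x) − h_j(x) ≥ 0 for all x ∈ ℝⁿ and all j. Then u(x) ≥ 0 for every x ∈ B, and consequently {x ∈ B | u(x) ≤ 0} = {x ∈ B | u(x) = 0}. -/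
/-- nonnegativity on `B` of the SDP certificate when `α < 1`:
with `α ∈ (0,1)`, `X₀ = {x | ∀ j, h_j(x) ≤ 0}`, `B ⊇ X₀` absorbing the
one-step reachable set of `X₀`, `D` nonempty, and `u` satisfying
`u(x) − α·u(f(x,d)) ≥ 0` on `B × D` and `(1 + h_j(x)²)·u(x) − h_j(x) ≥ 0` on
`ℝⁿ`, one has `u(x) ≥ 0` for every `x ∈ B`, and consequently
`{x ∈ B | u(x) ≤ 0} = {x ∈ B | u(x) = 0}`. -/
theorem sdp_certificate_nonneg {n m n₀ : ℕ} (hn₀ : 1 ≤ n₀)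
    (f : (Fin n → ℝ) → (Fin m → ℝ) → (Fin n → ℝ))
    (D : Set (Fin m → ℝ)) (hD : D.Nonempty)
    (h : Fin n₀ → (Fin n → ℝ) → ℝ)
    (α : ℝ) (hα : α ∈ Set.Ioo (0 : ℝ) 1)
    (B : Set (Fin n → ℝ))
    (hX₀B : {x : Fin n → ℝ | ∀ j : Fin n₀, h j x ≤ 0} ⊆ B)
    (hreach : ∀ x ∈ {x : Fin n → ℝ | ∀ j : Fin n₀, h j x ≤ 0},
      ∀ d ∈ D, f x d ∈ B)
    (u : (Fin n → ℝ) → ℝ)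
    (hu1 : ∀ x ∈ B, ∀ d ∈ D, u x - α * u (f x d) ≥ 0)
    (hu2 : ∀ (x : Fin n → ℝ) (j : Fin n₀), (1 + (h j x) ^ 2) * u x - h j x ≥ 0) :
    (∀ x ∈ B, 0 ≤ u x) ∧
      {x ∈ B | u x ≤ 0} = {x ∈ B | u x = 0} := by
  obtain ⟨hα0, hα1⟩ := hα
  obtain ⟨d, hd⟩ := hD
  -- if u x < 0 then x ∈ X₀
  have hneg : ∀ x : Fin n → ℝ, u x < 0 → ∀ j : Fin n₀, h j x ≤ 0 := by
    intro x hx j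
    have := hu2 x j
    nlinarith [sq_nonneg (h j x)]
  -- global lower bound -1/2
  have hlb : ∀ x : Fin n → ℝ, -(1/2 : ℝ) ≤ u x := by
    intro x
    have := hu2 x ⟨0, hn₀⟩
    nlinarith [sq_nonneg (h ⟨0, hn₀⟩ x + 1), sq_nonneg (h ⟨0, hn₀⟩ x)]
  -- inductive bound
  have key : ∀ k : ℕ, ∀ x ∈ B, -(α ^ k / 2) ≤ u x := by
    intro k
    induction k with
    | zero => intro x _; simpa using hlb x
    | succ k ih =>
      intro x hxB
      rcases lt_or_ge (u x) 0 with hx | hx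
      · have hX₀ : x ∈ {x : Fin n → ℝ | ∀ j : Fin n₀, h j x ≤ 0} := hneg x hx
        have hfB : f x d ∈ B := hreach x hX₀ d hd
        have h1 := hu1 x hxB d hd
        have h2 := ih (f x d) hfB
        have : -(α ^ k / 2) * α ≤ u (f x d) * α := by
          exact mul_le_mul_of_nonneg_right h2 (le_of_lt hα0)
        calc -(α ^ (k+1) / 2) = -(α ^ k / 2) * α := by ring
          _ ≤ u (f x d) * α := this
          _ ≤ u x := by linarith
      · have : 0 < α ^ (k+1) := pow_pos hα0 _
        linarith
  have hmain : ∀ x ∈ B, 0 ≤ u x := by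
    intro x hxB
    by_contra hx
    push_neg at hx
    obtain ⟨k, hk⟩ := exists_pow_lt_of_lt_one (by linarith : (0:ℝ) < -2 * u x) hα1
    have := key k x hxB
    linarith
  refine ⟨hmain, ?_⟩
  ext x
  simp only [Set.mem_setOf_eq]
  constructor
  · rintro ⟨hxB, hle⟩; exact ⟨hxB, le_antisymm hle (hmain x hxB)⟩
  · rintro ⟨hxB, heq⟩; exact ⟨hxB, le_of_eq heq⟩
end
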